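/- Let (X_n, A_n)_{n∈ℕ} be measurable spaces and (κ_n : ∏_{i≤n} X_i ⇝ X_{n+1})_{n∈ℕ} Markov kernels. Let a ≤ b in ℕ, u ∈ ∏_{i≤a} X_i, and let f : ∏_{n∈ℕ} X_n → ℝ be integrable with respect to the measure ξ_a(u). Then for ξ_a(u)-almost every x, the function f is integrable with respect to ξ_b(π_b(x)), and the conditional expectation of f with respect to the σ-algebra F_b := π_b^{-1}(⊗_{i≤b} A_i) under ξ_a(u) satisfies, for ξ_a(u)-almost every x: E_{ξ_a(u)}[f | F_b](x) = ∫_{∏_{n∈ℕ} X_n} f(y) ξ_b(π_b(x), dy). -/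

import Mathlib

open MeasureTheory ProbabilityTheory Preorder Filter
open scoped ENNReal ProbabilityTheory Topology

variable {X : ℕ → Type*} [∀ n, MeasurableSpace (X n)]

/-- Canonical map gluing a trajectory up to time `b` with a point of `X (b + 1)` into a
trajectory up to time `b + 1`. -/
def IicProdSucc (b : ℕ) (p : (Π i : Finset.Iic b, X i) × X (b + 1)) :
    Π i : Finset.Iic (b + 1), X i :=
  fun i ↦ if h : i.1 ≤ b then p.1 ⟨i.1, Finset.mem_Iic.2 h⟩
    else cast (congrArg X (Nat.le_antisymm (Finset.mem_Iic.1 i.2)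
      (Nat.lt_of_not_le h))).symm p.2

/-- The partial trajectory kernel `η_{a,b}` built from the kernels `κ n`: for `b ≤ a` it is the
deterministic kernel given by the restriction map, and `η_{a,b+1}` is obtained from `η_{a,b}` by
composing with the product of the identity kernel and `κ b`. -/
noncomputable def partialTraj (κ : ∀ n, Kernel (Π i : Finset.Iic n, X i) (X (n + 1))) (a : ℕ) :
    (b : ℕ) → Kernel (Π i : Finset.Iic a, X i) (Π i : Finset.Iic b, X i)
  | 0 => Kernel.deterministic (frestrictLe₂ (Nat.zero_le a)) (measurable_frestrictLe₂ _)
  | b + 1 =>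
    if h : b + 1 ≤ a then Kernel.deterministic (frestrictLe₂ h) (measurable_frestrictLe₂ h)
    else ((Kernel.id ×ₖ κ b) ∘ₖ partialTraj κ a b).map (IicProdSucc b)

/-! The partial-trajectory kernels above are Mathlib's `Kernel.partialTraj`, written with a
different gluing map. Hence, by uniqueness in the Ionescu–Tulcea theorem, `ξ` is
`Kernel.traj κ`, for which the statement is `Kernel.condExp_traj`. -/

lemma IicProdIoc_comp_prodMap_piSingleton (b : ℕ) :
    IicProdIoc b (b + 1) ∘ Prod.map id (MeasurableEquiv.piSingleton (X := X) b) =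
      IicProdSucc b := by
  ext p ⟨i, hi⟩
  simp only [Function.comp_apply, IicProdIoc, IicProdSucc, Prod.map]
  split_ifs
  · rfl
  · obtain rfl : i = b + 1 := by simp only [Finset.mem_Iic] at hi; omega
    rfl

lemma partialTraj_eq_kernel_partialTraj
    (κ : ∀ n, Kernel (Π i : Finset.Iic n, X i) (X (n + 1))) [∀ n, IsSFiniteKernel (κ n)]
    (a b : ℕ) : partialTraj κ a b = Kernel.partialTraj κ a b := by
  induction b with
  | zero => rw [Kernel.partialTraj_zero]; rfl
  | succ b ih =>
    by_cases hba : b + 1 ≤ a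
    · rw [partialTraj, dif_pos hba, Kernel.partialTraj_le hba]
    · have hP : Measurable (Prod.map (id : (Π i : Finset.Iic b, X i) → _)
          (MeasurableEquiv.piSingleton (X := X) b)) := by fun_prop
      rw [partialTraj, dif_neg hba, Kernel.partialTraj_succ_of_le (by omega), ih,
        ← Kernel.map_id (Kernel.id), Kernel.map_prod_map _ _ measurable_id
          (MeasurableEquiv.piSingleton b).measurable, Kernel.map_id, Kernel.map_comp,
        Kernel.map_comp, ← Kernel.map_comp_right _ hP measurable_IicProdIoc,
        IicProdIoc_comp_prodMap_piSingleton]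

lemma eq_traj_of_map_frestrictLe
    (κ : ∀ n, Kernel (Π i : Finset.Iic n, X i) (X (n + 1))) [∀ n, IsMarkovKernel (κ n)]
    {a : ℕ} (η : Kernel (Π i : Finset.Iic a, X i) (Π n, X n))
    (hη : ∀ b, η.map (frestrictLe b) = partialTraj κ a b) : η = Kernel.traj κ a :=
  Kernel.eq_traj κ η fun b ↦ (hη b).trans (partialTraj_eq_kernel_partialTraj κ a b)

theorem condexp_traj_general (κ : ∀ n, Kernel (Π i : Finset.Iic n, X i) (X (n + 1)))
    [∀ n, IsMarkovKernel (κ n)]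
    (ξ : ∀ n : ℕ, Kernel (Π i : Finset.Iic n, X i) (Π n, X n))
    (hchar : ∀ n b : ℕ, (ξ n).map (frestrictLe b) = partialTraj κ n b)
    {a b : ℕ} (hab : a ≤ b) (u : Π i : Finset.Iic a, X i)
    {f : (Π n, X n) → ℝ} (hf : Integrable f (ξ a u)) :
    (∀ᵐ x ∂(ξ a u), Integrable f (ξ b (frestrictLe b x))) ∧
      (∀ᵐ x ∂(ξ a u),
        condExp (MeasurableSpace.comap (frestrictLe b) MeasurableSpace.pi) (ξ a u) f x
          = ∫ y, f y ∂(ξ b (frestrictLe b x))) := by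
  obtain rfl : ξ = fun n ↦ Kernel.traj κ n :=
    funext fun n ↦ eq_traj_of_map_frestrictLe κ (ξ n) (hchar n)
  rw [← Filtration.piLE_eq_comap_frestrictLe]
  exact ⟨Kernel.integrable_traj hab u hf, Kernel.condExp_traj hab hf⟩

/-- Conditional expectation with respect to the trajectory kernels: for `a ≤ b`,
`u : Π i : Iic a, X i` and `f` integrable with respect to `ξ_a(u)`, for `ξ_a(u)`-almost every
`x` the function `f` is integrable with respect to `ξ_b(π_b x)` and the conditional
expectation of `f` given the σ-algebra `F_b` of events depending only on coordinates up to
`b` is `x ↦ ∫ y, f y ∂(ξ_b (π_b x))`. The trajectory kernels `ξ` are characterized by the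
fact that the pushforward of `ξ_a` under each restriction map `π_b` is `η_{a,b}`. -/
theorem condexp_traj (κ : ∀ n, Kernel (Π i : Finset.Iic n, X i) (X (n + 1)))
    [∀ n, IsMarkovKernel (κ n)]
    (ξ : ∀ n : ℕ, Kernel (Π i : Finset.Iic n, X i) (Π n, X n))
    (hξ : ∀ n, IsMarkovKernel (ξ n))
    (hchar : ∀ n b : ℕ, (ξ n).map (frestrictLe b) = partialTraj κ n b)
    {a b : ℕ} (hab : a ≤ b) (u : Π i : Finset.Iic a, X i)
    {f : (Π n, X n) → ℝ} (hf : Integrable f (ξ a u)) :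
    (∀ᵐ x ∂(ξ a u), Integrable f (ξ b (frestrictLe b x))) ∧
      (∀ᵐ x ∂(ξ a u),
        condExp (MeasurableSpace.comap (frestrictLe b) MeasurableSpace.pi) (ξ a u) f x
          = ∫ y, f y ∂(ξ b (frestrictLe b x))) :=
  condexp_traj_general κ ξ hchar hab u hf
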